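/- Let θ < λ be regular cardinals and D a locally downward coherent θ-covering matrix for λ. Suppose κ < λ is a cardinal such that either κ = θ^{+η} for some ordinal η < θ, or κ^θ < λ. Then for every Y ⊆ λ with |Y| = κ there is γ_Y < λ such that for every i < θ and β < λ there is j < θ with D(i,β) ∩ Y ⊆ D(j,γ_Y). -/

import Mathlib

noncomputable section

universe u

open Cardinal Set

/-- The order type of a set of ordinals: the unique ordinal `o` such that `s` is
order-isomorphic to `Set.Iio o` (and `0` if there is no such ordinal). -/
def otp (s : Set Ordinal) : Ordinal :=
  sInf {o : Ordinal | Nonempty (s ≃o Set.Iio o)}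

/-- `A` is unbounded in `β`. -/
def IsUnboundedIn (A : Set Ordinal) (β : Ordinal) : Prop :=
  ∀ γ < β, ∃ δ ∈ A, γ ≤ δ

/-- `γ` is a limit of elements of `C`. -/
def IsAccPt (C : Set Ordinal) (γ : Ordinal) : Prop :=
  ∀ δ < γ, ∃ ε ∈ C, δ < ε ∧ ε < γ

/-- `C` is club in `β`: a subset of `β`, unbounded in `β`, and closed under limits below `β`. -/
def IsClubIn (C : Set Ordinal) (β : Ordinal) : Prop :=
  C ⊆ Set.Iio β ∧ IsUnboundedIn C β ∧ ∀ γ < β, 0 < γ → IsAccPt C γ → γ ∈ C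

/-- `S` is stationary in `β`: it meets every club in `β`. -/
def IsStationaryIn (S : Set Ordinal) (β : Ordinal) : Prop :=
  ∀ C, IsClubIn C β → (S ∩ C).Nonempty

/-- `D` is a `θ`-covering matrix for `lam`. -/
def IsCoveringMatrix (θ lam : Cardinal) (D : Ordinal → Ordinal → Set Ordinal) : Prop :=
  (∀ β < lam.ord, (⋃ i ∈ Set.Iio θ.ord, D i β) = Set.Iio β) ∧
  (∀ β < lam.ord, ∀ i j, i < j → j < θ.ord → D i β ⊆ D j β) ∧
  (∀ β γ, β < γ → γ < lam.ord → ∀ i < θ.ord, ∃ j < θ.ord, D i β ⊆ D j γ)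

/-- `D` is transitive. -/
def TransitiveMatrix (θ lam : Cardinal) (D : Ordinal → Ordinal → Set Ordinal) : Prop :=
  ∀ α β, α < β → β < lam.ord → ∀ i < θ.ord, α ∈ D i β → D i α ⊆ D i β

/-- `D` is uniform: every limit `β < lam` has some `D i β` containing a club in `β`. -/
def UniformMatrix (θ lam : Cardinal) (D : Ordinal → Ordinal → Set Ordinal) : Prop :=
  ∀ β < lam.ord, Order.IsSuccLimit β → ∃ i < θ.ord, ∃ C ⊆ D i β, IsClubIn C β

/-- `D` is normal: the order types of its entries are bounded below `lam`. -/
def NormalMatrix (θ lam : Cardinal) (D : Ordinal → Ordinal → Set Ordinal) : Prop :=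
  ∃ b < lam.ord, ∀ i < θ.ord, ∀ γ < lam.ord, otp (D i γ) < b

/-- `β_D`: the least ordinal strictly above the order types of all entries of `D`. -/
def matrixBound (θ lam : Cardinal) (D : Ordinal → Ordinal → Set Ordinal) : Ordinal :=
  sInf {b | ∀ i < θ.ord, ∀ γ < lam.ord, otp (D i γ) < b}

/-- `D` is downward coherent. -/
def DownwardCoherent (θ lam : Cardinal) (D : Ordinal → Ordinal → Set Ordinal) : Prop :=
  ∀ α β, α < β → β < lam.ord → ∀ i < θ.ord, ∃ j < θ.ord, D i β ∩ Set.Iio α ⊆ D j α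

/-- `D` is locally downward coherent. -/
def LocallyDownwardCoherent (θ lam : Cardinal.{u})
    (D : Ordinal.{u} → Ordinal.{u} → Set Ordinal.{u}) : Prop :=
  ∀ X : Set Ordinal.{u}, X ⊆ Set.Iio lam.ord → #X ≤ Cardinal.lift.{u + 1} θ →
    ∃ γX < lam.ord, ∀ β < lam.ord, ∀ i < θ.ord, ∃ j < θ.ord,
      X ∩ D i β ⊆ X ∩ D j γX

/-- `D` is strongly locally downward coherent. -/
def StronglyLocallyDownwardCoherent (θ lam : Cardinal.{u})
    (D : Ordinal.{u} → Ordinal.{u} → Set Ordinal.{u}) : Prop :=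
  ∀ X : Set Ordinal.{u}, X ⊆ Set.Iio lam.ord → #X ≤ Cardinal.lift.{u + 1} θ →
    ∃ γX < lam.ord, ∀ β, γX ≤ β → β < lam.ord →
      ∃ i < θ.ord, ∀ j, i ≤ j → j < θ.ord → X ∩ D j β = X ∩ D j γX

/-- `D` covers `[T]^κ`. -/
def Covers (θ lam : Cardinal.{u}) (D : Ordinal.{u} → Ordinal.{u} → Set Ordinal.{u})
    (T : Set Ordinal.{u}) (κ : Cardinal.{u}) : Prop :=
  ∀ X ⊆ T, #X = Cardinal.lift.{u + 1} κ → ∃ i < θ.ord, ∃ β < lam.ord, X ⊆ D i β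

/-- The covering property `CP(D)`. -/
def CP (θ lam : Cardinal) (D : Ordinal → Ordinal → Set Ordinal) : Prop :=
  ∃ T ⊆ Set.Iio lam.ord, IsUnboundedIn T lam.ord ∧ Covers θ lam D T θ

/-- `CP(lam, θ)`: `CP(D)` holds for every locally downward coherent `θ`-covering matrix `D`. -/
def CPAll (θ lam : Cardinal) : Prop :=
  ∀ D, IsCoveringMatrix θ lam D → LocallyDownwardCoherent θ lam D → CP θ lam D

/-- `A_D`: the set of good points for `D`. -/
def goodPoints (θ lam : Cardinal) (D : Ordinal → Ordinal → Set Ordinal) : Set Ordinal :=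
  {β | β < lam.ord ∧ θ < Ordinal.cof β ∧
    ∃ A ⊆ Set.Iio β, IsUnboundedIn A β ∧
      ∀ γ < β, ∃ α < β, ∃ i < θ.ord, A ∩ Set.Iio γ ⊆ D i α}

/-- `θ^{+η}`: the `η`-th iterated cardinal successor of `θ`. -/
def iterSucc (θ : Cardinal) (η : Ordinal) : Cardinal :=
  Ordinal.limitRecOn η θ (fun _ ih => Order.succ ih)
    (fun o _ ih => ⨆ i : Set.Iio o, ih i.1 i.2)

/-- `f <* g` mod bounded subsets of `θ`. -/
def ltStar (θ : Cardinal) (f g : Ordinal → Ordinal) : Prop :=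
  ∃ i < θ.ord, ∀ j, i ≤ j → j < θ.ord → f j < g j

/-- `⟨f β : β < δ⟩` is a club-increasing sequence of functions from `θ` to the ordinals. -/
def ClubIncreasing (θ : Cardinal) (δ : Ordinal) (f : Ordinal → Ordinal → Ordinal) : Prop :=
  (∀ β < δ, ∀ i j, i ≤ j → j < θ.ord → f β i ≤ f β j) ∧
  (∀ α β, α < β → β < δ → ltStar θ (f α) (f β)) ∧
  (∀ β < δ, θ < Ordinal.cof β → ∃ C, IsClubIn C β ∧ ∃ i < θ.ord,
    ∀ α ∈ C, ∀ j, i ≤ j → j < θ.ord → f α j < f β j)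

/-- `γ_f`: the least ordinal strictly above all values of the sequence. -/
def seqBound (θ : Cardinal) (δ : Ordinal) (f : Ordinal → Ordinal → Ordinal) : Ordinal :=
  sInf {γ | ∀ β < δ, ∀ i < θ.ord, f β i < γ}

/-- `g` is an exact upper bound for `⟨f β : β < δ⟩` with respect to `<*` on `θ`. -/
def IsEub (θ : Cardinal) (δ : Ordinal) (f : Ordinal → Ordinal → Ordinal)
    (g : Ordinal → Ordinal) : Prop :=
  (∀ β < δ, ltStar θ (f β) g) ∧
  ∀ h : Ordinal → Ordinal, ltStar θ h g → ∃ β < δ, ltStar θ h (f β)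

/-- The simultaneous stationary reflection principle `R(lam, θ)`. -/
def RPrinciple (lam θ : Cardinal) : Prop :=
  ∃ S ⊆ Set.Iio lam.ord, IsStationaryIn S lam.ord ∧
    ∀ T : Ordinal → Set Ordinal,
      (∀ j < θ.ord, T j ⊆ S ∧ IsStationaryIn (T j) lam.ord) →
      ∃ α < lam.ord, ℵ₀ < Ordinal.cof α ∧
        ∀ j < θ.ord, IsStationaryIn (T j ∩ Set.Iio α) α

/-- A `□_κ`-sequence. -/
def IsSquareSeq (κ : Cardinal) (C : Ordinal → Set Ordinal) : Prop :=
  ∀ β < (Order.succ κ).ord, Order.IsSuccLimit β →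
    IsClubIn (C β) β ∧ otp (C β) ≤ κ.ord ∧
    ∀ α ∈ C β, 0 < α → IsAccPt (C β) α → C β ∩ Set.Iio α = C α

/-- The square principle `□_κ`. -/
def SquarePrinciple (κ : Cardinal) : Prop := ∃ C, IsSquareSeq κ C

/-- `f <* g` mod finite on `B ⊆ ω`. -/
def ltStarB (B : Set ℕ) (f g : ℕ → Ordinal) : Prop :=
  ∃ m, ∀ n ∈ B, m ≤ n → f n < g n

/-- `g` is an exact upper bound for `⟨f α : α < δ⟩` with respect to `<*` mod finite on `B`. -/
def IsEubB (B : Set ℕ) (δ : Ordinal) (f : Ordinal → ℕ → Ordinal) (g : ℕ → Ordinal) : Prop :=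
  (∀ α < δ, ltStarB B (f α) g) ∧
  ∀ h : ℕ → Ordinal, ltStarB B h g → ∃ α < δ, ltStarB B h (f α)

/-- A scale of length `ℵ_{ω+1}` in `∏_{n ∈ B} ℵ_n`. -/
def IsScale (B : Set ℕ) (f : Ordinal → ℕ → Ordinal) : Prop :=
  (∀ α < (Cardinal.aleph (Ordinal.omega0 + 1)).ord, ∀ n ∈ B, f α n < (Cardinal.aleph n).ord) ∧
  (∀ α β, α < β → β < (Cardinal.aleph (Ordinal.omega0 + 1)).ord → ltStarB B (f α) (f β)) ∧
  (∀ g : ℕ → Ordinal, (∀ n ∈ B, g n < (Cardinal.aleph n).ord) →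
    ∃ α < (Cardinal.aleph (Ordinal.omega0 + 1)).ord, ltStarB B g (f α))

/-!
Call `γ < lam` a coherence point of `Y` if every trace `D i β ∩ Y` lies in a single entry
`D j γ`. Local downward coherence gives coherence points to sets of size at most `θ`, and by
regularity of `θ` a point that serves every `θ`-sized subset of `Y` serves `Y`. Now cover `Y` by
fewer than `lam` pieces with coherence points; these points are bounded below the regular `lam`.
The bound is a coherence point of `Y` if each `θ`-sized subset of `Y` lies in one piece (the
initial segments of an enumeration of `Y` in type `μ⁺ > θ`; or, when `κ ^ θ < lam`, the
`θ`-sized subsets themselves), or if there are fewer than `θ` pieces (the segments of type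
`θ^{+ζ}`, `ζ < η`, when `η < θ` is a limit). Induction on `η < θ` then reaches `θ^{+η}`.
-/

open Ordinal

universe v

def IsCoherencePoint (θ lam : Cardinal.{u}) (D : Ordinal.{u} → Ordinal.{u} → Set Ordinal.{u})
    (Y : Set Ordinal.{u}) (γ : Ordinal.{u}) : Prop :=
  ∀ i < θ.ord, ∀ β < lam.ord, ∃ j < θ.ord, D i β ∩ Y ⊆ D j γ

def HasCoherencePoint (θ lam : Cardinal.{u}) (D : Ordinal.{u} → Ordinal.{u} → Set Ordinal.{u})
    (Y : Set Ordinal.{u}) : Prop :=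
  ∃ γ < lam.ord, IsCoherencePoint θ lam D Y γ

def CoherentUpTo (θ lam : Cardinal.{u}) (D : Ordinal.{u} → Ordinal.{u} → Set Ordinal.{u})
    (c : Cardinal.{u}) : Prop :=
  ∀ Y ⊆ Iio lam.ord, #Y ≤ Cardinal.lift.{u + 1} c → HasCoherencePoint θ lam D Y

theorem exists_lt_ord_forall_lt {c : Cardinal.{u}} (hc : c.IsRegular) {ι : Type v}
    (hι : Cardinal.lift.{u} #ι < Cardinal.lift.{v} c) (f : ι → Ordinal.{u})
    (hf : ∀ i, f i < c.ord) : ∃ γ < c.ord, ∀ i, f i < γ := by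
  refine ⟨⨆ i, f i + 1, lift_iSup_add_one_lt_of_lt_cof (by rwa [← lift_cof, hc.cof_ord]) hf,
    fun i => (lt_add_one (f i)).trans_le (le_ciSup ⟨c.ord, ?_⟩ i)⟩
  rintro _ ⟨j, rfl⟩
  exact Order.add_one_le_of_lt (hf j)

theorem exists_injOn_mapsTo_Iio_ord {Y : Set Ordinal.{u}} {c : Cardinal.{u}}
    (hY : #Y ≤ Cardinal.lift.{u + 1} c) :
    ∃ r : Ordinal.{u} → Ordinal.{u}, InjOn r Y ∧ MapsTo r Y (Iio c.ord) := by
  classical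
  rw [← c.card_ord, ← Cardinal.mk_Iio_ordinal] at hY
  obtain ⟨f⟩ := hY
  refine ⟨fun y => if h : y ∈ Y then f ⟨y, h⟩ else 0, fun y hy z hz hyz => ?_, fun y hy => ?_⟩
  · simp only [dif_pos hy, dif_pos hz] at hyz
    exact congrArg Subtype.val (f.injective (Subtype.ext hyz))
  · simpa only [dif_pos hy] using (f ⟨y, hy⟩).2

theorem mk_inter_preimage_Iio_le {Y : Set Ordinal.{u}} {r : Ordinal.{u} → Ordinal.{u}}
    (hr : InjOn r Y) (o : Ordinal.{u}) :
    #(Y ∩ r ⁻¹' Iio o : Set Ordinal) ≤ Cardinal.lift.{u + 1} o.card := by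
  rw [← Cardinal.mk_image_eq_of_injOn _ _ (hr.mono inter_subset_left), ← Cardinal.mk_Iio_ordinal]
  exact Cardinal.mk_le_mk_of_subset (image_subset_iff.2 fun _ hy => hy.2)

theorem iterSucc_zero (θ : Cardinal.{u}) : iterSucc θ 0 = θ :=
  limitRecOn_zero _ _ _

theorem iterSucc_add_one (θ : Cardinal.{u}) (η : Ordinal.{u}) :
    iterSucc θ (η + 1) = Order.succ (iterSucc θ η) :=
  limitRecOn_add_one _ _ _ _

theorem iterSucc_of_isSuccLimit (θ : Cardinal.{u}) {η : Ordinal.{u}} (hη : Order.IsSuccLimit η) :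
    iterSucc θ η = ⨆ ζ : Iio η, iterSucc θ ζ :=
  limitRecOn_limit _ _ _ _ hη

theorem le_iterSucc (θ : Cardinal.{u}) (η : Ordinal.{u}) : θ ≤ iterSucc θ η := by
  induction η using Ordinal.limitRecOn with
  | zero => exact (iterSucc_zero θ).ge
  | add_one η ih => exact ih.trans ((iterSucc_add_one θ η).symm ▸ Order.le_succ _)
  | limit η hη ih =>
    rw [iterSucc_of_isSuccLimit θ hη]
    exact le_ciSup_of_le Cardinal.bddAbove_of_small ⟨0, hη.bot_lt⟩ (ih 0 hη.bot_lt)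

section Coherence

variable {θ lam : Cardinal.{u}} {D : Ordinal.{u} → Ordinal.{u} → Set Ordinal.{u}}
  {Y Z : Set Ordinal.{u}} {γ γ' : Ordinal.{u}}

theorem IsCoherencePoint.subset (h : IsCoherencePoint θ lam D Z γ) (hYZ : Y ⊆ Z) :
    IsCoherencePoint θ lam D Y γ := fun i hi β hβ =>
  (h i hi β hβ).imp fun _ ⟨hj, hsub⟩ => ⟨hj, (inter_subset_inter_right _ hYZ).trans hsub⟩

theorem IsCoherencePoint.of_le (hD : IsCoveringMatrix θ lam D) (h : IsCoherencePoint θ lam D Y γ)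
    (hγ : γ ≤ γ') (hγ' : γ' < lam.ord) : IsCoherencePoint θ lam D Y γ' := by
  rcases hγ.eq_or_lt with rfl | hlt
  · exact h
  intro i hi β hβ
  obtain ⟨j, hj, hsub⟩ := h i hi β hβ
  obtain ⟨k, hk, hjk⟩ := hD.2.2 γ γ' hlt hγ' j hj
  exact ⟨k, hk, hsub.trans hjk⟩

theorem isCoherencePoint_of_forall_subset
    (H : ∀ X ⊆ Y, #X ≤ Cardinal.lift.{u + 1} θ → IsCoherencePoint θ lam D X γ) :
    IsCoherencePoint θ lam D Y γ := by
  intro i hi β hβ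
  by_contra! hbad
  have hwitness : ∀ j : Iio θ.ord, ∃ y ∈ D i β ∩ Y, y ∉ D j γ := fun j =>
    not_subset.1 (hbad j j.2)
  choose y hy hyγ using hwitness
  have hcard : #(range y) ≤ Cardinal.lift.{u + 1} θ := by
    simpa only [Cardinal.mk_Iio_ordinal, card_ord] using Cardinal.mk_range_le (f := y)
  obtain ⟨j, hj, hsub⟩ := H _ (range_subset_iff.2 fun j => (hy j).2) hcard i hi β hβ
  exact hyγ ⟨j, hj⟩ (hsub ⟨(hy _).1, mem_range_self _⟩)

theorem isCoherencePoint_iUnion (hθ : θ.IsRegular) (hD : IsCoveringMatrix θ lam D)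
    (hγ : γ < lam.ord) {ι : Type v} (hι : Cardinal.lift.{u} #ι < Cardinal.lift.{v} θ)
    {P : ι → Set Ordinal.{u}} (h : ∀ s, IsCoherencePoint θ lam D (P s) γ) :
    IsCoherencePoint θ lam D (⋃ s, P s) γ := by
  intro i hi β hβ
  choose j hj hsub using fun s => h s i hi β hβ
  obtain ⟨k, hk, hjk⟩ := exists_lt_ord_forall_lt hθ hι j hj
  refine ⟨k, hk, fun y ⟨hyD, hyP⟩ => ?_⟩
  obtain ⟨s, hs⟩ := mem_iUnion.1 hyP
  exact hD.2.1 γ hγ _ _ (hjk s) hk (hsub s ⟨hyD, hs⟩)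

theorem exists_forall_isCoherencePoint (hlam : lam.IsRegular) (hD : IsCoveringMatrix θ lam D)
    {ι : Type v} (hι : Cardinal.lift.{u} #ι < Cardinal.lift.{v} lam) {P : ι → Set Ordinal.{u}}
    (h : ∀ s, HasCoherencePoint θ lam D (P s)) :
    ∃ γ < lam.ord, ∀ s, IsCoherencePoint θ lam D (P s) γ := by
  choose g hg hP using h
  obtain ⟨γ, hγ, hgγ⟩ := exists_lt_ord_forall_lt hlam hι g hg
  exact ⟨γ, hγ, fun s => (hP s).of_le hD (hgγ s).le hγ⟩

theorem hasCoherencePoint_of_forall_subset_exists_subset (hlam : lam.IsRegular)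
    (hD : IsCoveringMatrix θ lam D) {ι : Type v}
    (hι : Cardinal.lift.{u} #ι < Cardinal.lift.{v} lam) {P : ι → Set Ordinal.{u}}
    (h : ∀ s, HasCoherencePoint θ lam D (P s))
    (hcov : ∀ X ⊆ Y, #X ≤ Cardinal.lift.{u + 1} θ → ∃ s, X ⊆ P s) :
    HasCoherencePoint θ lam D Y := by
  obtain ⟨γ, hγ, hP⟩ := exists_forall_isCoherencePoint hlam hD hι h
  refine ⟨γ, hγ, isCoherencePoint_of_forall_subset fun X hXY hX => ?_⟩
  obtain ⟨s, hs⟩ := hcov X hXY hX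
  exact (hP s).subset hs

theorem hasCoherencePoint_of_subset_iUnion (hθ : θ.IsRegular) (hlam : lam.IsRegular)
    (hθlam : θ < lam) (hD : IsCoveringMatrix θ lam D) {ι : Type v}
    (hι : Cardinal.lift.{u} #ι < Cardinal.lift.{v} θ) {P : ι → Set Ordinal.{u}}
    (h : ∀ s, HasCoherencePoint θ lam D (P s)) (hY : Y ⊆ ⋃ s, P s) :
    HasCoherencePoint θ lam D Y := by
  obtain ⟨γ, hγ, hP⟩ :=
    exists_forall_isCoherencePoint hlam hD (hι.trans (Cardinal.lift_lt.2 hθlam)) h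
  exact ⟨γ, hγ, (isCoherencePoint_iUnion hθ hD hγ hι hP).subset hY⟩

theorem LocallyDownwardCoherent.coherentUpTo (hldc : LocallyDownwardCoherent θ lam D) :
    CoherentUpTo θ lam D θ := fun Y hY hcard =>
  let ⟨γ, hγ, h⟩ := hldc Y hY hcard
  ⟨γ, hγ, fun i hi β hβ =>
    (h β hβ i hi).imp fun _ ⟨hj, hsub⟩ => ⟨hj, fun _ hy => (hsub ⟨hy.2, hy.1⟩).2⟩⟩

theorem CoherentUpTo.mono {c c' : Cardinal.{u}} (h : CoherentUpTo θ lam D c) (hc : c' ≤ c) :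
    CoherentUpTo θ lam D c' := fun Y hY hcard =>
  h Y hY (hcard.trans (Cardinal.lift_le.2 hc))

theorem CoherentUpTo.succ (hθ : θ.IsRegular) (hlam : lam.IsRegular)
    (hD : IsCoveringMatrix θ lam D) {μ : Cardinal.{u}} (hθμ : θ ≤ μ) (hμlam : Order.succ μ < lam)
    (h : CoherentUpTo θ lam D μ) : CoherentUpTo θ lam D (Order.succ μ) := by
  intro Y hYlam hY
  obtain ⟨r, hr, hrY⟩ := exists_injOn_mapsTo_Iio_ord hY
  have hreg : (Order.succ μ).IsRegular := Cardinal.isRegular_succ (hθ.aleph0_le.trans hθμ)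
  refine hasCoherencePoint_of_forall_subset_exists_subset hlam hD
    (ι := Iio (Order.succ μ).ord) (P := fun o => Y ∩ r ⁻¹' Iio o.1) ?_ (fun o => ?_) ?_
  · simpa only [Cardinal.mk_Iio_ordinal, card_ord, Cardinal.lift_lift, Cardinal.lift_lt]
      using hμlam
  · refine h _ (inter_subset_left.trans hYlam) ((mk_inter_preimage_Iio_le hr o).trans ?_)
    exact Cardinal.lift_le.2 (Order.lt_succ_iff.1 (Cardinal.lt_ord.1 o.2))
  · intro X hXY hX
    have hXμ : Cardinal.lift.{u} #X < Cardinal.lift.{u + 1} (Order.succ μ) := by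
      rw [Cardinal.lift_id'.{u, u + 1}]
      exact hX.trans_lt (Cardinal.lift_lt.2 (Order.lt_succ_of_le hθμ))
    obtain ⟨o, ho, hXo⟩ :=
      exists_lt_ord_forall_lt hreg hXμ (fun x : X => r x) fun x => hrY (hXY x.2)
    exact ⟨⟨o, ho⟩, fun x hx => ⟨hXY hx, hXo ⟨x, hx⟩⟩⟩

theorem CoherentUpTo.iSup (hθ : θ.IsRegular) (hlam : lam.IsRegular) (hθlam : θ < lam)
    (hD : IsCoveringMatrix θ lam D) {ι : Type v} (hι : Cardinal.lift.{u} #ι < Cardinal.lift.{v} θ)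
    {c : ι → Cardinal.{u}} (h : ∀ s, CoherentUpTo θ lam D (c s)) :
    CoherentUpTo θ lam D (⨆ s, c s) := by
  intro Y hYlam hY
  obtain ⟨r, hr, hrY⟩ := exists_injOn_mapsTo_Iio_ord hY
  refine hasCoherencePoint_of_subset_iUnion hθ hlam hθlam hD hι
    (P := fun s => Y ∩ r ⁻¹' Iio (c s).ord) (fun s => ?_) fun y hy => ?_
  · refine h s _ (inter_subset_left.trans hYlam) ((mk_inter_preimage_Iio_le hr _).trans ?_)
    rw [card_ord]
  · obtain ⟨s, hs⟩ := exists_lt_of_lt_ciSup' (Cardinal.lt_ord.1 (hrY hy))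
    exact mem_iUnion.2 ⟨s, hy, Cardinal.lt_ord.2 hs⟩

theorem coherentUpTo_of_power_lt (hlam : lam.IsRegular) (hD : IsCoveringMatrix θ lam D)
    (hldc : LocallyDownwardCoherent θ lam D) {κ : Cardinal.{u}} (hκ : ℵ₀ ≤ κ)
    (hpow : κ ^ θ < lam) : CoherentUpTo θ lam D κ := by
  intro Y hYlam hY
  refine hasCoherencePoint_of_forall_subset_exists_subset hlam hD
    (ι := {t : Set Y // #t ≤ Cardinal.lift.{u + 1} θ}) (P := fun t => Subtype.val '' t.1)
    ?_ (fun t => ?_) ?_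
  · rw [Cardinal.lift_id'.{u, u + 1}]
    calc #{t : Set Y // #t ≤ Cardinal.lift.{u + 1} θ}
        ≤ max #Y ℵ₀ ^ Cardinal.lift.{u + 1} θ := Cardinal.mk_bounded_set_le _ _
      _ ≤ Cardinal.lift.{u + 1} (κ ^ θ) := by
          rw [Cardinal.lift_power]
          refine Cardinal.power_le_power_right (max_le hY ?_)
          simpa only [Cardinal.lift_aleph0] using Cardinal.lift_le.2 hκ
      _ < Cardinal.lift.{u + 1} lam := Cardinal.lift_lt.2 hpow
  · exact hldc.coherentUpTo _ ((image_subset_range _ _).trans (by simpa using hYlam))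
      (Cardinal.mk_image_le.trans t.2)
  · intro X hXY hX
    refine ⟨⟨Subtype.val ⁻¹' X,
      (Cardinal.mk_preimage_of_injective _ _ Subtype.val_injective).trans hX⟩, ?_⟩
    rw [image_preimage_eq_of_subset (by simpa using hXY)]

theorem coherentUpTo_iterSucc (hθ : θ.IsRegular) (hlam : lam.IsRegular) (hθlam : θ < lam)
    (hD : IsCoveringMatrix θ lam D) (hldc : LocallyDownwardCoherent θ lam D)
    {η : Ordinal.{u}} (hη : η < θ.ord) (hηlam : iterSucc θ η < lam) :
    CoherentUpTo θ lam D (iterSucc θ η) := by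
  induction η using Ordinal.limitRecOn with
  | zero => exact (iterSucc_zero θ).symm ▸ hldc.coherentUpTo
  | add_one ς ih =>
    rw [iterSucc_add_one] at hηlam ⊢
    exact (ih ((lt_add_one ς).trans hη) ((Order.lt_succ _).trans hηlam)).succ hθ hlam hD
      (le_iterSucc θ ς) hηlam
  | limit η hl ih =>
    rw [iterSucc_of_isSuccLimit θ hl] at hηlam ⊢
    refine CoherentUpTo.iSup hθ hlam hθlam hD ?_ fun ζ =>
      ih ζ ζ.2 (ζ.2.trans hη) ((le_ciSup Cardinal.bddAbove_of_small ζ).trans_lt hηlam)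
    rwa [Cardinal.mk_Iio_ordinal, Cardinal.lift_lift, Cardinal.lift_lt, ← Cardinal.lt_ord]

end Coherence

/-- If `D` is a locally downward coherent `θ`-covering matrix for `lam` and
`κ < lam` is either `θ^{+η}` with `η < θ` or satisfies `κ ^ θ < lam`, then for every
`Y ⊆ lam` with `|Y| = κ` there is `γ_Y < lam` as in local downward coherence. -/
theorem stmt11 (θ lam : Cardinal.{u}) (hθ : θ.IsRegular) (hlam : lam.IsRegular) (hθlam : θ < lam)
    (D : Ordinal → Ordinal → Set Ordinal) (hD : IsCoveringMatrix θ lam D)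
    (hldc : LocallyDownwardCoherent θ lam D) (κ : Cardinal) (hκ : κ < lam)
    (hyp : (∃ η < θ.ord, κ = iterSucc θ η) ∨ κ ^ θ < lam) :
    ∀ Y : Set Ordinal.{u}, Y ⊆ Set.Iio lam.ord → #Y = Cardinal.lift.{u + 1} κ →
      ∃ γY < lam.ord, ∀ i < θ.ord, ∀ β < lam.ord, ∃ j < θ.ord,
        D i β ∩ Y ⊆ D j γY := by
  intro Y hY hYcard
  have hcoh : CoherentUpTo θ lam D κ := by
    rcases hyp with ⟨η, hη, rfl⟩ | hpow
    · exact coherentUpTo_iterSucc hθ hlam hθlam hD hldc hη hκ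
    rcases le_or_gt κ θ with hκθ | hθκ
    · exact hldc.coherentUpTo.mono hκθ
    · exact coherentUpTo_of_power_lt hlam hD hldc (hθ.aleph0_le.trans hθκ.le) hpow
  exact hcoh Y hY hYcard.le

end
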